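/- arXiv:2512.12458 — 5 statements merged into one kernel-verified Lean document; each statement's English description precedes it below -/
import Mathlib

section
/- Let n ≥ 2 be a fixed integer. For each dimension m, let X_m be a nonnegative real-valued random variable with E[X_m] > 0 and finite variance, and let X_{m,1}, …, X_{m,n} be n independent copies of X_m. If lim_{m→∞} Var[X_m]/(E[X_m])² = 0, then for every ε > 0, lim_{m→∞} Pr[ max_{1≤i≤n} X_{m,i} ≤ (1+ε) · min_{1≤i≤n} X_{m,i} ] = 1. -/
open MeasureTheory ProbabilityTheory Filter Topology

/-! If every `x i` lies within `δ a` of `a`, then `max x ≤ (1 + δ) a` and `(1 - δ) a ≤ min x`;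
the choice `δ = ε / (2 + ε)` makes `(1 + δ) / (1 - δ) = 1 + ε`. By Chebyshev's inequality and a
union bound, all `n` copies lie within `δ E[X_m]` of `E[X_m]` except on an event of probability
at most `n Var[X_m] / (δ E[X_m])²`, which tends to `0` with the relative variance. -/

lemma iSup_le_one_add_mul_iInf_of_abs_sub_le {ι : Type*} [Nonempty ι] {x : ι → ℝ} {a ε : ℝ}
    (hε : 0 ≤ ε) (hx : ∀ i, |x i - a| ≤ ε / (2 + ε) * a) :
    ⨆ i, x i ≤ (1 + ε) * ⨅ i, x i := by
  set δ := ε / (2 + ε)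
  have hsup : ⨆ i, x i ≤ (1 + δ) * a := ciSup_le fun i => by linarith [(abs_le.mp (hx i)).2]
  have hinf : (1 - δ) * a ≤ ⨅ i, x i := le_ciInf fun i => by linarith [(abs_le.mp (hx i)).1]
  calc ⨆ i, x i ≤ (1 + δ) * a := hsup
    _ = (1 + ε) * ((1 - δ) * a) := by simp only [δ]; field_simp; ring
    _ ≤ (1 + ε) * ⨅ i, x i := by gcongr

lemma measure_exists_le_abs_sub_integral_le {ι Ω Ω' : Type*} [Fintype ι]
    [MeasurableSpace Ω] [MeasurableSpace Ω'] {μ : Measure Ω} {ν : Measure Ω'}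
    [IsFiniteMeasure μ] {X : ι → Ω → ℝ} {Y : Ω' → ℝ}
    (hXY : ∀ i, IdentDistrib (X i) Y μ ν) (hY : MemLp Y 2 ν) {c : ℝ} (hc : 0 < c) :
    μ {ω | ∃ i, c ≤ |X i ω - ∫ ω', Y ω' ∂ν|} ≤
      Fintype.card ι * ENNReal.ofReal (variance Y ν / c ^ 2) := by
  calc μ {ω | ∃ i, c ≤ |X i ω - ∫ ω', Y ω' ∂ν|}
      ≤ ∑ i, μ {ω | c ≤ |X i ω - ∫ ω', Y ω' ∂ν|} := by
        simpa only [Set.ofPred_exists] using measure_iUnion_fintype_le μ _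
    _ ≤ ∑ _i : ι, ENNReal.ofReal (variance Y ν / c ^ 2) := Finset.sum_le_sum fun i _ => by
        simpa only [(hXY i).integral_eq, (hXY i).variance_eq] using
          meas_ge_le_variance_div_sq ((hXY i).symm.memLp_snd hY) hc
    _ = _ := by simp

lemma one_sub_measure_le_measure_of_compl_subset {Ω : Type*} [MeasurableSpace Ω]
    {μ : Measure Ω} [IsProbabilityMeasure μ] {s t : Set Ω} (h : sᶜ ⊆ t) : 1 - μ s ≤ μ t := by
  rw [tsub_le_iff_left, ← measure_univ (μ := μ)]
  exact (measure_univ_le_add_compl s).trans (by gcongr)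

lemma one_sub_le_measure_iSup_le_one_add_mul_iInf {ι Ω Ω' : Type*} [Fintype ι] [Nonempty ι]
    [MeasurableSpace Ω] [MeasurableSpace Ω'] {μ : Measure Ω} {ν : Measure Ω'}
    [IsProbabilityMeasure μ] {X : ι → Ω → ℝ} {Y : Ω' → ℝ}
    (hXY : ∀ i, IdentDistrib (X i) Y μ ν) (hY : MemLp Y 2 ν) (hE : 0 < ∫ ω, Y ω ∂ν)
    {ε : ℝ} (hε : 0 < ε) :
    1 - Fintype.card ι * ENNReal.ofReal (variance Y ν / (ε / (2 + ε) * ∫ ω, Y ω ∂ν) ^ 2) ≤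
      μ {ω | ⨆ i, X i ω ≤ (1 + ε) * ⨅ i, X i ω} := by
  have hc : 0 < ε / (2 + ε) * ∫ ω, Y ω ∂ν := by positivity
  calc _ ≤ 1 - μ {ω | ∃ i, ε / (2 + ε) * ∫ ω, Y ω ∂ν ≤ |X i ω - ∫ ω, Y ω ∂ν|} := by
        gcongr
        exact measure_exists_le_abs_sub_integral_le hXY hY hc
    _ ≤ _ := one_sub_measure_le_measure_of_compl_subset fun ω hω =>
        iSup_le_one_add_mul_iInf_of_abs_sub_le hε.le fun i => by
          simp only [Set.mem_compl_iff, Set.mem_ofPred_eq, not_exists, not_le] at hω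
          exact (hω i).le

/-- Beyer et al. forward direction, paper Theorem 4.1, "⟹":
If the relative variance `Var[X_m] / (E[X_m])²` tends to `0` as the dimension `m → ∞`,
then for every `ε > 0` the probability that the maximum of `n` independent copies of `X_m`
is at most `(1+ε)` times their minimum tends to `1`, i.e. the problem is unstable. -/
theorem stmt_0 {n : ℕ} (hn : 2 ≤ n)
    (Ω : ℕ → Type) [∀ m, MeasureSpace (Ω m)]
    [∀ m, IsProbabilityMeasure (ℙ : Measure (Ω m))]
    (X : (m : ℕ) → Fin n → Ω m → ℝ)
    (hident : ∀ m i, Measure.map (X m i) ℙ = Measure.map (X m ⟨0, by omega⟩) ℙ)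
    (hL2 : ∀ m i, MemLp (X m i) 2 ℙ)
    (hEpos : ∀ m, 0 < ∫ ω, X m ⟨0, by omega⟩ ω)
    (hRelVar : Tendsto
      (fun m => variance (X m ⟨0, by omega⟩) ℙ / (∫ ω, X m ⟨0, by omega⟩ ω) ^ 2)
      atTop (nhds 0)) :
    ∀ ε > (0 : ℝ), Tendsto
      (fun m => (ℙ : Measure (Ω m))
        {ω | (⨆ i, X m i ω) ≤ (1 + ε) * ⨅ i, X m i ω})
      atTop (nhds 1) := by
  intro ε hε
  have : Nonempty (Fin n) := ⟨⟨0, by omega⟩⟩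
  set δ := ε / (2 + ε)
  set Y := fun m => X m ⟨0, by omega⟩
  set p := fun m =>
    (n : ENNReal) * ENNReal.ofReal (variance (Y m) ℙ / (δ * ∫ ω, Y m ω) ^ 2)
  have hp : Tendsto p atTop (𝓝 0) := by
    have h : Tendsto (fun m => variance (Y m) ℙ / (δ * ∫ ω, Y m ω) ^ 2) atTop (𝓝 0) := by
      simpa [mul_pow, div_mul_eq_div_div_swap] using hRelVar.div_const (δ ^ 2)
    simpa using ENNReal.Tendsto.const_mul (ENNReal.tendsto_ofReal h)
      (Or.inr (ENNReal.natCast_ne_top n))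
  have hgood (m : ℕ) : 1 - p m ≤ ℙ {ω | (⨆ i, X m i ω) ≤ (1 + ε) * ⨅ i, X m i ω} := by
    simpa using one_sub_le_measure_iSup_le_one_add_mul_iInf
      (fun i => ⟨(hL2 m i).aemeasurable, (hL2 m _).aemeasurable, hident m i⟩)
      (hL2 m _) (hEpos m) hε
  have hp' : Tendsto (fun m => 1 - p m) atTop (𝓝 1) := by
    simpa using ENNReal.Tendsto.sub tendsto_const_nhds hp (Or.inl ENNReal.one_ne_top)
  exact tendsto_of_tendsto_of_tendsto_of_le_of_le hp' tendsto_const_nhds hgood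
    fun m => prob_le_one
end

section
/- Fix a constant c > 1. Let D' be a nonempty finite set of positive real numbers partitioned into nonempty subsets D_1, …, D_n (each number representing the distance δ(q,d) from a fixed query q to a database vector d). Define DMIN := min over all elements of D', DMAX := max over all elements of D', DMIN' := min_k min_{d∈D_k} δ(q,d), and DMAX' := max_k min_{d∈D_k} δ(q,d). If the non-degeneracy condition c · max_k min_{d∈D_k} δ(q,d) ≥ max_k max_{d∈D_k} δ(q,d) holds and DMAX/DMIN > c, then DMAX'/DMIN' ≥ (1/c) · (DMAX/DMIN) > 1. -/
/-!
Regrouping the distances into document sets changes neither the overall minimum nor the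
overall maximum, so `DMIN' = DMIN` and `DMAX ≤ max_k max_{D_k} δ ≤ c · DMAX'` by
non-degeneracy. Hence `DMAX' / DMIN' ≥ (DMAX / c) / DMIN`, which exceeds `1` since
`DMAX / DMIN > c`.
-/

section Fibers

variable {α ι κ : Type*} [ConditionallyCompleteLattice α] [Finite ι] [Nonempty ι]
  {part : ι → κ}

theorem ciSup_ciSup_fiber (hpart : part.Surjective) (f : ι → α) :
    ⨆ k, ⨆ i : {i // part i = k}, f i = ⨆ i, f i := by
  have : Finite κ := .of_surjective part hpart
  have : Nonempty κ := .map part inferInstance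
  refine le_antisymm (ciSup_le fun k => ?_) (ciSup_le fun i => ?_)
  · have : Nonempty {i // part i = k} := nonempty_subtype.mpr (hpart k)
    exact ciSup_le fun i => le_ciSup (Set.finite_range f).bddAbove i.1
  · calc f i ≤ ⨆ j : {j // part j = part i}, f j :=
          le_ciSup (f := fun j : {j // part j = part i} => f j)
            (Set.finite_range _).bddAbove ⟨i, rfl⟩
      _ ≤ ⨆ k, ⨆ j : {j // part j = k}, f j :=
          le_ciSup (f := fun k => ⨆ j : {j // part j = k}, f j) (Set.finite_range _).bddAbove _

theorem ciInf_ciInf_fiber (hpart : part.Surjective) (f : ι → α) :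
    ⨅ k, ⨅ i : {i // part i = k}, f i = ⨅ i, f i :=
  ciSup_ciSup_fiber (α := αᵒᵈ) hpart f

end Fibers

theorem stmt_3_general {c : ℝ} (hc : 1 < c) {n : ℕ}
    {ι : Type} [Fintype ι] [Nonempty ι]
    (δ : ι → ℝ) (hδ : ∀ i, 0 < δ i)
    (part : ι → Fin n) (hpart : Function.Surjective part)
    (hnondeg : c * (⨆ k, ⨅ i : {i // part i = k}, δ i.1) ≥
      ⨆ k, ⨆ i : {i // part i = k}, δ i.1)
    (hstable : (⨆ i, δ i) / (⨅ i, δ i) > c) :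
    (⨆ k, ⨅ i : {i // part i = k}, δ i.1) / (⨅ k, ⨅ i : {i // part i = k}, δ i.1)
        ≥ (1 / c) * ((⨆ i, δ i) / (⨅ i, δ i)) ∧
      (1 / c) * ((⨆ i, δ i) / (⨅ i, δ i)) > 1 := by
  have hc0 : 0 < c := one_pos.trans hc
  have hDMIN : 0 < ⨅ i, δ i := by
    obtain ⟨i, hi⟩ := exists_eq_ciInf_of_finite (f := δ)
    exact hi ▸ hδ i
  have hDMAX : (⨆ i, δ i) / c ≤ ⨆ k, ⨅ i : {i // part i = k}, δ i.1 := by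
    rw [div_le_iff₀ hc0, mul_comm, ← ciSup_ciSup_fiber hpart δ]
    exact hnondeg
  rw [ciInf_ciInf_fiber hpart δ]
  constructor
  · calc 1 / c * ((⨆ i, δ i) / ⨅ i, δ i) = (⨆ i, δ i) / c / ⨅ i, δ i := by ring
      _ ≤ _ := by gcongr
  · calc (1 : ℝ) = 1 / c * c := by field_simp
      _ < _ := by gcongr

/-- core inequality of paper Lemma 5.2, Chamfer stability with singleton
query sets.  The database vectors are indexed by a finite nonempty type `ι`, `δ i > 0` is
the distance from the fixed query to vector `i`, and `part : ι → Fin n` assigns each vector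
to one of the `n` document sets (each nonempty, i.e. `part` is surjective).
`DMIN = ⨅ i, δ i`, `DMAX = ⨆ i, δ i`,
`DMIN' = ⨅ k ⨅_{part i = k} δ i` and `DMAX' = ⨆ k ⨅_{part i = k} δ i`.
Under the non-degeneracy condition `c · max_k min_{d∈D_k} δ ≥ max_k max_{d∈D_k} δ`
and `DMAX/DMIN > c`, we get `DMAX'/DMIN' ≥ (1/c)·(DMAX/DMIN) > 1`. -/
theorem stmt_3 {c : ℝ} (hc : 1 < c) {n : ℕ} (hn : 0 < n)
    {ι : Type} [Fintype ι] [Nonempty ι]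
    (δ : ι → ℝ) (hδ : ∀ i, 0 < δ i)
    (part : ι → Fin n) (hpart : Function.Surjective part)
    (hnondeg : c * (⨆ k, ⨅ i : {i // part i = k}, δ i.1) ≥
      ⨆ k, ⨆ i : {i // part i = k}, δ i.1)
    (hstable : (⨆ i, δ i) / (⨅ i, δ i) > c) :
    (⨆ k, ⨅ i : {i // part i = k}, δ i.1) / (⨅ k, ⨅ i : {i // part i = k}, δ i.1)
        ≥ (1 / c) * ((⨆ i, δ i) / (⨅ i, δ i)) ∧
      (1 / c) * ((⨆ i, δ i) / (⨅ i, δ i)) > 1 :=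
  stmt_3_general hc δ hδ part hpart hnondeg hstable
end

section
/- Let Δ > 0 and α > 0. Let δ be a random variable with 0 ≤ δ ≤ Δ almost surely and E[δ] > 0, and let B be an event with p := Pr[B] ∈ (0,1). Define the penalized distance δ' := δ + α·1_B, where 1_B is the indicator of B. Then Var(δ') / (E[δ'])² ≥ ( α²·p·(1−p) − 2·α·p·Δ ) / (Δ + α·p)². -/
/-!
Write `δ' = δ + α·1_B` and `p = Pr[B]`. Expanding the variance of the sum,
`Var δ' = Var δ + 2α·Cov(δ, 1_B) + α²·p(1-p)`, and since `δ ≥ 0` we have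
`Cov(δ, 1_B) = E[δ·1_B] - E[δ]·p ≥ -E[δ]·p ≥ -Δ·p`. On the other hand
`0 < E[δ'] = E[δ] + α·p ≤ Δ + α·p`, so dividing by `E[δ']²` instead of `(Δ + α·p)²` can only
increase the nonnegative quantity `Var δ'`.
-/

open MeasureTheory ProbabilityTheory

namespace ProbabilityTheory

variable {Ω : Type*} {mΩ : MeasurableSpace Ω} {μ : Measure Ω} [IsProbabilityMeasure μ]
  {X : Ω → ℝ} {B : Set Ω}

lemma memLp_indicator_one (hB : MeasurableSet B) (p : ENNReal) :
    MemLp (B.indicator (1 : Ω → ℝ)) p μ :=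
  memLp_const (1 : ℝ) |>.indicator hB

lemma variance_indicator_one (hB : MeasurableSet B) :
    Var[B.indicator 1; μ] = μ.real B * (1 - μ.real B) := by
  have hsq : B.indicator (1 : Ω → ℝ) ^ 2 = B.indicator 1 := by
    ext ω; by_cases h : ω ∈ B <;> simp [h]
  rw [variance_eq_sub (memLp_indicator_one hB 2), hsq, integral_indicator_one hB]
  ring

lemma neg_integral_mul_le_covariance_indicator_one (hX : MemLp X 2 μ) (hX0 : 0 ≤ᵐ[μ] X)
    (hB : MeasurableSet B) :
    -(μ[X] * μ.real B) ≤ cov[X, B.indicator 1; μ] := by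
  have hXB : 0 ≤ μ[X * B.indicator (1 : Ω → ℝ)] := by
    refine integral_nonneg_of_ae ?_
    filter_upwards [hX0] with ω hω
    exact mul_nonneg hω (Set.indicator_nonneg (fun _ _ ↦ zero_le_one) ω)
  rw [covariance_eq_sub hX (memLp_indicator_one hB 2), integral_indicator_one hB]
  linarith

lemma integral_add_const_mul_indicator_one (hX : Integrable X μ) (hB : MeasurableSet B)
    (α : ℝ) : ∫ ω, (X ω + α * B.indicator 1 ω) ∂μ = μ[X] + α * μ.real B := by
  rw [integral_add hX ((memLp_indicator_one hB 1).integrable le_rfl |>.const_mul α),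
    integral_const_mul, integral_indicator_one hB]

lemma variance_add_const_mul_indicator_one_ge (hX : MemLp X 2 μ) (hX0 : 0 ≤ᵐ[μ] X)
    (hB : MeasurableSet B) {α : ℝ} (hα : 0 ≤ α) :
    α ^ 2 * μ.real B * (1 - μ.real B) - 2 * α * μ.real B * μ[X]
      ≤ Var[fun ω ↦ X ω + α * B.indicator 1 ω; μ] := by
  have hαB : MemLp (fun ω ↦ α * B.indicator 1 ω) 2 μ := (memLp_indicator_one hB 2).const_mul α
  rw [variance_fun_add hX hαB, covariance_const_mul_right, variance_const_mul,
    variance_indicator_one hB]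
  have hcov := neg_integral_mul_le_covariance_indicator_one hX hX0 hB
  linarith [variance_nonneg X μ, mul_le_mul_of_nonneg_left hcov hα]

end ProbabilityTheory

lemma div_sq_le_div_sq_of_le {lb v m M : ℝ} (hlb : lb ≤ v) (hv : 0 ≤ v) (hm : 0 < m)
    (hmM : m ≤ M) : lb / M ^ 2 ≤ v / m ^ 2 :=
  calc lb / M ^ 2 ≤ v / M ^ 2 := by gcongr
    _ ≤ v / m ^ 2 := by gcongr

theorem stmt_5_general {Ω : Type} [MeasureSpace Ω] [IsProbabilityMeasure (ℙ : Measure Ω)]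
    {Δ α : ℝ} (hα : 0 < α)
    (δ : Ω → ℝ) (hmeas : Measurable δ)
    (hbd : ∀ᵐ ω, 0 ≤ δ ω ∧ δ ω ≤ Δ)
    (hEpos : 0 < ∫ ω, δ ω)
    (B : Set Ω) (hB : MeasurableSet B) :
    variance (fun ω => δ ω + α * B.indicator (fun _ => (1 : ℝ)) ω) ℙ
        / (∫ ω, (δ ω + α * B.indicator (fun _ => (1 : ℝ)) ω)) ^ 2
      ≥ (α ^ 2 * (ℙ B).toReal * (1 - (ℙ B).toReal) - 2 * α * (ℙ B).toReal * Δ)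
        / (Δ + α * (ℙ B).toReal) ^ 2 := by
  simp only [← measureReal_def]
  have hδ0 : 0 ≤ᵐ[ℙ] δ := hbd.mono fun _ h ↦ h.1
  have hδ : MemLp δ 2 ℙ := MemLp.of_bound hmeas.aestronglyMeasurable Δ <|
    hbd.mono fun _ h ↦ (Real.norm_of_nonneg h.1).trans_le h.2
  have hδΔ : ∫ ω, δ ω ≤ Δ := by
    have := integral_mono_ae (hδ.integrable one_le_two) (integrable_const Δ)
      (hbd.mono fun _ h ↦ h.2)
    simpa using this
  have hp : 0 ≤ α * (ℙ : Measure Ω).real B := mul_nonneg hα.le measureReal_nonneg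
  have hmean := integral_add_const_mul_indicator_one (hδ.integrable one_le_two) hB α
  have hvar := variance_add_const_mul_indicator_one_ge hδ hδ0 hB hα.le
  refine div_sq_le_div_sq_of_le ?_ (variance_nonneg _ _) ?_ ?_
  · exact le_trans (by linarith [mul_le_mul_of_nonneg_left hδΔ hp]) hvar
  · exact hmean ▸ add_pos_of_pos_of_nonneg hEpos hp
  · exact hmean.trans_le (by linarith)

/-- quantitative lower bound underlying paper Theorem 6.3, stability of
filtered search: for a distance `δ` with `0 ≤ δ ≤ Δ` a.s. and `E[δ] > 0`, a filter-mismatch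
event `B` with `p = Pr[B] ∈ (0,1)`, and the penalized distance `δ' = δ + α·1_B`,
`RelVar(δ') ≥ (α²·p·(1-p) - 2·α·p·Δ) / (Δ + α·p)²`. -/
theorem stmt_5 {Ω : Type} [MeasureSpace Ω] [IsProbabilityMeasure (ℙ : Measure Ω)]
    {Δ α : ℝ} (hΔ : 0 < Δ) (hα : 0 < α)
    (δ : Ω → ℝ) (hmeas : Measurable δ)
    (hbd : ∀ᵐ ω, 0 ≤ δ ω ∧ δ ω ≤ Δ)
    (hEpos : 0 < ∫ ω, δ ω)
    (B : Set Ω) (hB : MeasurableSet B)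
    (hp0 : 0 < (ℙ B).toReal) (hp1 : (ℙ B).toReal < 1) :
    variance (fun ω => δ ω + α * B.indicator (fun _ => (1 : ℝ)) ω) ℙ
        / (∫ ω, (δ ω + α * B.indicator (fun _ => (1 : ℝ)) ω)) ^ 2
      ≥ (α ^ 2 * (ℙ B).toReal * (1 - (ℙ B).toReal) - 2 * α * (ℙ B).toReal * Δ)
        / (Δ + α * (ℙ B).toReal) ^ 2 :=
  stmt_5_general hα δ hmeas hbd hEpos B hB
end

section
/- Fix a real number p ≥ 1, a positive integer m, and a real number α with 1/2 ≤ α ≤ 1. Let q, d ∈ ℝ^m have nonnegative coordinates with Σ_{i=1}^m q_i^p = Σ_{i=1}^m d_i^p = 1. Let T_q, T_d ⊆ {1,…,m} be disjoint index sets with Σ_{i∈T_q} q_i^p ≥ α and Σ_{i∈T_d} d_i^p ≥ α. Then Σ_{i=1}^m |q_i − d_i|^p ≥ 2 · ( α^{1/p} − (1−α)^{1/p} )^p. -/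
/-!
On each head, the ℓ_p reverse triangle inequality bounds the ℓ_p distance below by
`α^{1/p} - (1-α)^{1/p}`: the head carries at least `α` of one vector's mass, and by disjointness
at most `1 - α` of the other's. The two heads are disjoint, so their contributions add up.
-/

open Finset

namespace Real

variable {ι : Type*} {p : ℝ}

theorem Lp_sub_Lp_le_Lp_abs_sub (s : Finset ι) (f g : ι → ℝ) (hp : 1 ≤ p) :
    (∑ i ∈ s, |f i| ^ p) ^ (1 / p) - (∑ i ∈ s, |g i| ^ p) ^ (1 / p) ≤
      (∑ i ∈ s, |f i - g i| ^ p) ^ (1 / p) := by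
  have := Lp_add_le s (f - g) g hp
  simp only [Pi.sub_apply, sub_add_cancel] at this
  linarith

theorem le_sum_abs_sub_rpow_of_sum_rpow_bounds (s : Finset ι) (hp : 1 ≤ p) {f g : ι → ℝ}
    (hf : ∀ i ∈ s, 0 ≤ f i) (hg : ∀ i ∈ s, 0 ≤ g i) {A B : ℝ}
    (hA : A ≤ ∑ i ∈ s, f i ^ p) (hB : ∑ i ∈ s, g i ^ p ≤ B) (hBA : B ≤ A) :
    (A ^ (1 / p) - B ^ (1 / p)) ^ p ≤ ∑ i ∈ s, |f i - g i| ^ p := by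
  have hp0 : 0 < p := one_pos.trans_le hp
  have hB0 : 0 ≤ B := (sum_nonneg fun i hi => rpow_nonneg (hg i hi) p).trans hB
  have abs_sum {h : ι → ℝ} (hh : ∀ i ∈ s, 0 ≤ h i) : ∑ i ∈ s, |h i| ^ p = ∑ i ∈ s, h i ^ p :=
    sum_congr rfl fun i hi => by rw [abs_of_nonneg (hh i hi)]
  have hroot : A ^ (1 / p) - B ^ (1 / p) ≤ (∑ i ∈ s, |f i - g i| ^ p) ^ (1 / p) :=
    calc A ^ (1 / p) - B ^ (1 / p)
        ≤ (∑ i ∈ s, |f i| ^ p) ^ (1 / p) - (∑ i ∈ s, |g i| ^ p) ^ (1 / p) := by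
          rw [abs_sum hf, abs_sum hg]
          exact sub_le_sub (rpow_le_rpow (hB0.trans hBA) hA (by positivity))
            (rpow_le_rpow (sum_nonneg fun i hi => rpow_nonneg (hg i hi) p) hB (by positivity))
      _ ≤ (∑ i ∈ s, |f i - g i| ^ p) ^ (1 / p) := Lp_sub_Lp_le_Lp_abs_sub s f g hp
  calc (A ^ (1 / p) - B ^ (1 / p)) ^ p
      ≤ ((∑ i ∈ s, |f i - g i| ^ p) ^ (1 / p)) ^ p := by
        gcongr
        exact sub_nonneg.2 (rpow_le_rpow hB0 hBA (by positivity))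
    _ = ∑ i ∈ s, |f i - g i| ^ p := by
        rw [one_div, rpow_inv_rpow (sum_nonneg fun i _ => by positivity) hp0.ne']

end Real

theorem Finset.sum_le_one_sub_of_disjoint {ι : Type*} [Fintype ι] {f : ι → ℝ}
    (hf : ∀ i, 0 ≤ f i) (hsum : ∑ i, f i = 1) {s t : Finset ι} (hst : Disjoint s t) {α : ℝ}
    (hs : α ≤ ∑ i ∈ s, f i) : ∑ i ∈ t, f i ≤ 1 - α := by
  classical
  have := sum_le_univ_sum_of_nonneg (s := s ∪ t) hf
  rw [sum_union hst] at this
  linarith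

theorem stmt_12_general {p : ℝ} (hp : 1 ≤ p) {m : ℕ}
    {α : ℝ} (hα1 : 1 / 2 ≤ α)
    (q d : Fin m → ℝ) (hq : ∀ i, 0 ≤ q i) (hd : ∀ i, 0 ≤ d i)
    (hqunit : ∑ i, q i ^ p = 1) (hdunit : ∑ i, d i ^ p = 1)
    (Tq Td : Finset (Fin m)) (hdisj : Disjoint Tq Td)
    (hTq : α ≤ ∑ i ∈ Tq, q i ^ p) (hTd : α ≤ ∑ i ∈ Td, d i ^ p) :
    ∑ i, |q i - d i| ^ p ≥ 2 * (α ^ (1 / p) - (1 - α) ^ (1 / p)) ^ p := by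
  have hα : 1 - α ≤ α := by linarith
  have hq_pow i : 0 ≤ q i ^ p := Real.rpow_nonneg (hq i) p
  have hd_pow i : 0 ≤ d i ^ p := Real.rpow_nonneg (hd i) p
  have head_q := Real.le_sum_abs_sub_rpow_of_sum_rpow_bounds Tq hp (fun i _ => hq i)
    (fun i _ => hd i) hTq (sum_le_one_sub_of_disjoint hd_pow hdunit hdisj.symm hTd) hα
  have head_d := Real.le_sum_abs_sub_rpow_of_sum_rpow_bounds Td hp (fun i _ => hd i)
    (fun i _ => hq i) hTd (sum_le_one_sub_of_disjoint hq_pow hqunit hdisj hTq) hα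
  simp only [abs_sub_comm (d _)] at head_d
  have heads := sum_le_univ_sum_of_nonneg (s := Tq ∪ Td) fun i =>
    Real.rpow_nonneg (abs_nonneg (q i - d i)) p
  rw [sum_union hdisj] at heads
  linarith

/-- disjoint-head separation lemma inside paper Theorem 7.3: for
`p ≥ 1`, `α ∈ [1/2, 1]`, ℓ_p-unit nonnegative vectors `q, d ∈ ℝ^m`, and disjoint index
sets `T_q, T_d` each carrying at least `α` of the corresponding vector's ℓ_p^p mass,
`Σ_i |q_i - d_i|^p ≥ 2·(α^{1/p} - (1-α)^{1/p})^p`. -/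
theorem stmt_12 {p : ℝ} (hp : 1 ≤ p) {m : ℕ} (hm : 0 < m)
    {α : ℝ} (hα1 : 1 / 2 ≤ α) (hα2 : α ≤ 1)
    (q d : Fin m → ℝ) (hq : ∀ i, 0 ≤ q i) (hd : ∀ i, 0 ≤ d i)
    (hqunit : ∑ i, q i ^ p = 1) (hdunit : ∑ i, d i ^ p = 1)
    (Tq Td : Finset (Fin m)) (hdisj : Disjoint Tq Td)
    (hTq : α ≤ ∑ i ∈ Tq, q i ^ p) (hTd : α ≤ ∑ i ∈ Td, d i ^ p) :
    ∑ i, |q i - d i| ^ p ≥ 2 * (α ^ (1 / p) - (1 - α) ^ (1 / p)) ^ p :=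
  stmt_12_general hp hα1 q d hq hd hqunit hdunit Tq Td hdisj hTq hTd
end

section
/- Fix a real number p ≥ 1, a positive integer m, and parameters α ∈ [1/2, 1), γ > 0, π ∈ (0,1), ρ ∈ (0,1], τ > 0 with τ² < m and ρ > τ²/m. On a probability space, let q, d : Ω → ℝ^m be random vectors and T_q, T_d : Ω → (subsets of {1,…,m}) be random index sets such that: (i) the pair (q, T_q) is independent of the pair (d, T_d); (ii) almost surely, q and d have nonnegative coordinates with Σ_i q_i^p = Σ_i d_i^p = 1; (iii) almost surely Σ_{i∈T_q} q_i^p ≥ α; (iv) the event C := { Σ_{i∈T_d} d_i^p ≥ α } satisfies Pr[C] ≥ ρ; (v) Pr[i ∈ T_q] ≤ τ/m and Pr[i ∈ T_d] ≤ τ/m for every i; (vi) the overlap statistic S := Σ_{i ∈ T_q ∩ T_d} min{q_i^p, d_i^p} satisfies π ≤ Pr[S ≥ γ] and Pr[S ≥ γ] ≤ τ²/m. Define δ := (Σ_{i=1}^m |q_i − d_i|^p)^{1/p}, X := (2 − 2γ)^{1/p}, and Y_m := ((ρ − τ²/m)/(1 − π)) · 2^{1/p} · (α^{1/p} − (1−α)^{1/p}).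 If Y_m > X, then E[δ] > 0 and Var(δ)/(E[δ])² ≥ (π/4)·(1 − τ²/m)·(Y_m − X)². -/
/-!
On the overlap event `Z = {S ≥ γ}` the distance satisfies `δ^p ≤ 2 - 2S ≤ 2 - 2γ`, because
coordinatewise `|a - b|^p + 2 min(a^p, b^p) ≤ a^p + b^p` for `p ≥ 1`. If the two heads are
disjoint and the document head is concentrated, Minkowski's inequality on each head gives
`δ ≥ 2^{1/p} (α^{1/p} - (1-α)^{1/p})`; by independence and a union bound over coordinates the
heads meet with probability at most `τ²/m`, so this happens, inside `Zᶜ`, with probability at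
least `ρ - τ²/m`. Thus the mean of `δ` is at most `X` on `Z` and at least `Y_m` on `Zᶜ`, and
splitting the variance over `Z` and `Zᶜ` gives `Var δ ≥ Pr[Z] Pr[Zᶜ] (Y_m - X)² > 0`. This
forces `E δ > 0`, and `E δ ≤ 2` turns the variance bound into the relative-variance bound.
-/

open MeasureTheory ProbabilityTheory Finset

/-- We equip the (finite, hence discrete) type of finite subsets of `Fin m` with the
discrete σ-algebra, so that a random head index set is a measurable map into it. -/
instance (m : ℕ) : MeasurableSpace (Finset (Fin m)) := ⊤

section LpDistance

variable {ι : Type*} {p : ℝ}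

-- Minkowski's inequality, read backwards.
theorem rpow_one_div_sub_le_of_block (hp : 1 ≤ p) {x y : ι → ℝ} (hx : ∀ i, 0 ≤ x i)
    (hy : ∀ i, 0 ≤ y i) {u : Finset ι} {a b : ℝ} (ha : 0 ≤ a) (hxa : a ≤ ∑ i ∈ u, x i ^ p)
    (hyb : ∑ i ∈ u, y i ^ p ≤ b) :
    a ^ (1 / p) - b ^ (1 / p) ≤ (∑ i ∈ u, |x i - y i| ^ p) ^ (1 / p) := by
  have hp' : 0 ≤ 1 / p := one_div_nonneg.2 (by linarith)
  have hmink := Real.Lp_add_le u (fun i => x i - y i) y hp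
  simp only [sub_add_cancel, abs_of_nonneg (hx _), abs_of_nonneg (hy _)] at hmink
  have hxa' := Real.rpow_le_rpow ha hxa hp'
  have hyb' := Real.rpow_le_rpow (sum_nonneg fun i _ => Real.rpow_nonneg (hy i) p) hyb hp'
  linarith

theorem one_sub_rpow_le_rpow_of_half_le {α z : ℝ} (hα : 1 / 2 ≤ α) (hα1 : α ≤ 1) (hz : 0 ≤ z) :
    (1 - α) ^ z ≤ α ^ z :=
  Real.rpow_le_rpow (by linarith) (by linarith) hz

variable [Fintype ι]

noncomputable def lpDist (p : ℝ) (x y : ι → ℝ) : ℝ := (∑ i, |x i - y i| ^ p) ^ (1 / p)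

theorem abs_sub_rpow_add_two_mul_min_le (hp : 1 ≤ p) {a b : ℝ} (ha : 0 ≤ a) (hb : 0 ≤ b) :
    |a - b| ^ p + 2 * min (a ^ p) (b ^ p) ≤ a ^ p + b ^ p := by
  wlog hab : a ≤ b generalizing a b
  · have := this hb ha (le_of_not_ge hab)
    rwa [abs_sub_comm, min_comm, add_comm (b ^ p)] at this
  have hsuper := Real.add_rpow_le_rpow_add (sub_nonneg.2 hab) ha hp
  rw [sub_add_cancel] at hsuper
  rw [min_eq_left (Real.rpow_le_rpow ha hab (by linarith)), abs_sub_comm,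
    abs_of_nonneg (sub_nonneg.2 hab)]
  linarith

theorem sum_abs_sub_rpow_add_two_mul_sum_min_le (hp : 1 ≤ p) {x y : ι → ℝ}
    (hx : ∀ i, 0 ≤ x i) (hy : ∀ i, 0 ≤ y i) (s : Finset ι) :
    ∑ i, |x i - y i| ^ p + 2 * ∑ i ∈ s, min (x i ^ p) (y i ^ p) ≤
      ∑ i, x i ^ p + ∑ i, y i ^ p := by
  calc ∑ i, |x i - y i| ^ p + 2 * ∑ i ∈ s, min (x i ^ p) (y i ^ p)
      ≤ ∑ i, (|x i - y i| ^ p + 2 * min (x i ^ p) (y i ^ p)) := by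
        rw [sum_add_distrib, ← mul_sum]
        gcongr
        · exact fun i _ _ => le_min (Real.rpow_nonneg (hx i) p) (Real.rpow_nonneg (hy i) p)
        · exact subset_univ s
    _ ≤ ∑ i, (x i ^ p + y i ^ p) :=
        sum_le_sum fun i _ => abs_sub_rpow_add_two_mul_min_le hp (hx i) (hy i)
    _ = ∑ i, x i ^ p + ∑ i, y i ^ p := sum_add_distrib

theorem lpDist_nonneg (x y : ι → ℝ) : 0 ≤ lpDist p x y :=
  Real.rpow_nonneg (sum_nonneg fun _ _ => Real.rpow_nonneg (abs_nonneg _) p) _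

theorem Measurable.lpDist {Ω : Type*} [MeasurableSpace Ω] {x y : Ω → ι → ℝ} (hx : Measurable x)
    (hy : Measurable y) : Measurable fun ω => lpDist p (x ω) (y ω) :=
  Measurable.pow_const (by fun_prop) _

theorem lpDist_le_of_le_sum_min (hp : 1 ≤ p) {x y : ι → ℝ} (hx : ∀ i, 0 ≤ x i)
    (hy : ∀ i, 0 ≤ y i) (hx1 : ∑ i, x i ^ p = 1) (hy1 : ∑ i, y i ^ p = 1) {s : Finset ι} {γ : ℝ}
    (hγ : γ ≤ ∑ i ∈ s, min (x i ^ p) (y i ^ p)) :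
    lpDist p x y ≤ (2 - 2 * γ) ^ (1 / p) := by
  have := sum_abs_sub_rpow_add_two_mul_sum_min_le hp hx hy s
  exact Real.rpow_le_rpow (sum_nonneg fun i _ => Real.rpow_nonneg (abs_nonneg _) p)
    (by linarith) (one_div_nonneg.2 (by linarith))

theorem lpDist_le_two (hp : 1 ≤ p) {x y : ι → ℝ} (hx : ∀ i, 0 ≤ x i)
    (hy : ∀ i, 0 ≤ y i) (hx1 : ∑ i, x i ^ p = 1) (hy1 : ∑ i, y i ^ p = 1) :
    lpDist p x y ≤ 2 := by
  have h := lpDist_le_of_le_sum_min hp hx hy hx1 hy1 (s := ∅) (γ := 0) le_rfl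
  calc lpDist p x y ≤ 2 ^ (1 / p) := by simpa using h
    _ ≤ 2 ^ (1 : ℝ) := Real.rpow_le_rpow_of_exponent_le one_le_two
        (div_le_one_of_le₀ hp (by linarith))
    _ = 2 := Real.rpow_one 2

theorem le_lpDist_of_disjoint (hp : 1 ≤ p) {α : ℝ} (hα : 1 / 2 ≤ α) {x y : ι → ℝ}
    (hx : ∀ i, 0 ≤ x i) (hy : ∀ i, 0 ≤ y i) (hx1 : ∑ i, x i ^ p = 1) (hy1 : ∑ i, y i ^ p = 1)
    {s t : Finset ι} (hst : Disjoint s t) (hxs : α ≤ ∑ i ∈ s, x i ^ p)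
    (hyt : α ≤ ∑ i ∈ t, y i ^ p) :
    2 ^ (1 / p) * (α ^ (1 / p) - (1 - α) ^ (1 / p)) ≤ lpDist p x y := by
  classical
  have hp0 : 0 < p := by linarith
  have hsum_union : ∀ f : ι → ℝ, (∀ i, 0 ≤ f i) → ∑ i ∈ s, f i + ∑ i ∈ t, f i ≤ ∑ i, f i :=
    fun f hf => (sum_union hst).symm.trans_le <|
      sum_le_sum_of_subset_of_nonneg (subset_univ _) fun i _ _ => hf i
  have hys : ∑ i ∈ s, y i ^ p ≤ 1 - α := by
    linarith [hsum_union _ fun i => Real.rpow_nonneg (hy i) p]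
  have hxt : ∑ i ∈ t, x i ^ p ≤ 1 - α := by
    linarith [hsum_union _ fun i => Real.rpow_nonneg (hx i) p]
  have hα1 : α ≤ 1 := by linarith [sum_nonneg fun i (_ : i ∈ s) => Real.rpow_nonneg (hy i) p]
  set c := α ^ (1 / p) - (1 - α) ^ (1 / p)
  have hc : 0 ≤ c := sub_nonneg.2 (one_sub_rpow_le_rpow_of_half_le hα hα1 (by positivity))
  have hblock : ∀ u : Finset ι, c ≤ (∑ i ∈ u, |x i - y i| ^ p) ^ (1 / p) →
      c ^ p ≤ ∑ i ∈ u, |x i - y i| ^ p := fun u h => by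
    rw [one_div] at h
    exact (Real.le_rpow_inv_iff_of_pos hc
      (sum_nonneg fun i _ => Real.rpow_nonneg (abs_nonneg _) p) hp0).1 h
  have hs := hblock s (rpow_one_div_sub_le_of_block hp hx hy (by linarith) hxs hys)
  have ht := hblock t (by simpa only [abs_sub_comm] using
    rpow_one_div_sub_le_of_block hp hy hx (by linarith) hyt hxt)
  calc 2 ^ (1 / p) * c = (2 * c ^ p) ^ (1 / p) := by
        rw [Real.mul_rpow zero_le_two (Real.rpow_nonneg hc p), one_div,
          Real.rpow_rpow_inv hc hp0.ne']
    _ ≤ lpDist p x y := Real.rpow_le_rpow (by positivity)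
        (by linarith [hsum_union _ fun i => Real.rpow_nonneg (abs_nonneg (x i - y i)) p])
        (by positivity)

end LpDistance

section RandomFinset

variable {Ω ι : Type*} [MeasurableSpace Ω] [Fintype ι] [DecidableEq ι]
  [MeasurableSpace (Finset ι)] [DiscreteMeasurableSpace (Finset ι)]

theorem measurable_sum_of_measurable_finset {T : Ω → Finset ι} (hT : Measurable T)
    {f : ι → Ω → ℝ} (hf : ∀ i, Measurable (f i)) : Measurable fun ω => ∑ i ∈ T ω, f i ω := by
  have hite : ∀ ω, ∑ i ∈ T ω, f i ω = ∑ i, if i ∈ T ω then f i ω else 0 := fun ω => by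
    rw [sum_ite_mem, univ_inter]
  simp_rw [hite]
  exact measurable_sum _ fun i _ =>
    (hf i).ite (hT (.of_discrete (s := {s | i ∈ s}))) measurable_const

theorem measureReal_inter_nonempty_le {μ : Measure Ω} {A B : Ω → Finset ι}
    (hAB : IndepFun A B μ) {τ : ℝ} (hA : ∀ i, μ.real {ω | i ∈ A ω} ≤ τ / Fintype.card ι)
    (hB : ∀ i, μ.real {ω | i ∈ B ω} ≤ τ / Fintype.card ι) :
    μ.real {ω | (A ω ∩ B ω).Nonempty} ≤ τ ^ 2 / Fintype.card ι := by
  have hunion : {ω | (A ω ∩ B ω).Nonempty} = ⋃ i, {ω | i ∈ A ω} ∩ {ω | i ∈ B ω} := by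
    ext ω; simp [Finset.Nonempty]
  calc μ.real {ω | (A ω ∩ B ω).Nonempty}
      ≤ ∑ i, μ.real ({ω | i ∈ A ω} ∩ {ω | i ∈ B ω}) :=
        hunion ▸ measureReal_iUnion_fintype_le _
    _ = ∑ i, μ.real {ω | i ∈ A ω} * μ.real {ω | i ∈ B ω} := by
        refine sum_congr rfl fun i _ => ?_
        simp only [measureReal_def, ← ENNReal.toReal_mul]
        exact congrArg ENNReal.toReal (hAB.measure_inter_preimage_eq_mul {s | i ∈ s} {s | i ∈ s}
          .of_discrete .of_discrete)
    _ ≤ ∑ _i : ι, τ / Fintype.card ι * (τ / Fintype.card ι) :=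
        sum_le_sum fun i _ => mul_le_mul (hA i) (hB i) measureReal_nonneg
          (measureReal_nonneg.trans (hA i))
    _ = τ ^ 2 / Fintype.card ι := by
        rcases eq_or_ne (Fintype.card ι : ℝ) 0 with h | h
        · simp [h]
        · rw [sum_const, card_univ, nsmul_eq_mul]
          field_simp

end RandomFinset

section Variance

variable {Ω : Type*} [MeasurableSpace Ω] {μ : Measure Ω}

theorem two_mul_setIntegral_sub_sq_le [IsFiniteMeasure μ] {h : Ω → ℝ} (hh : MemLp h 2 μ)
    (s : Set Ω) (c : ℝ) :
    2 * c * ∫ ω in s, h ω ∂μ - c ^ 2 * μ.real s ≤ ∫ ω in s, h ω ^ 2 ∂μ := by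
  have hint : IntegrableOn h s μ := (hh.integrable one_le_two).integrableOn
  have hint2 : IntegrableOn (fun ω => h ω ^ 2) s μ := hh.integrable_sq.integrableOn
  have hsq : (fun ω => (h ω - c) ^ 2) = fun ω => h ω ^ 2 - 2 * c * h ω + c ^ 2 := by
    ext ω; ring
  have hnonneg : 0 ≤ ∫ ω in s, (h ω - c) ^ 2 ∂μ := integral_nonneg fun ω => sq_nonneg _
  rw [hsq, integral_add (hint2.fun_sub (hint.const_mul _)) (integrable_const _),
    integral_sub hint2 (hint.const_mul _), integral_const_mul, setIntegral_const,
    smul_eq_mul] at hnonneg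
  linarith

theorem mul_sq_le_variance_of_setIntegral_le [IsProbabilityMeasure μ] {g : Ω → ℝ}
    (hg : MemLp g 2 μ) {Z : Set Ω} (hZ : MeasurableSet Z) {X Y : ℝ} (hXY : X ≤ Y)
    (hgZ : ∫ ω in Z, g ω ∂μ ≤ μ.real Z * X) (hgZc : μ.real Zᶜ * Y ≤ ∫ ω in Zᶜ, g ω ∂μ) :
    μ.real Z * μ.real Zᶜ * (Y - X) ^ 2 ≤ variance g μ := by
  set E := μ[g]
  have hint := hg.integrable one_le_two
  have hh : MemLp (fun ω => g ω - E) 2 μ := hg.sub (memLp_const E)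
  have hvar : variance g μ = ∫ ω in Z, (g ω - E) ^ 2 ∂μ + ∫ ω in Zᶜ, (g ω - E) ^ 2 ∂μ := by
    rw [variance_eq_integral hg.aemeasurable, integral_add_compl hZ hh.integrable_sq]
  have hcentered : ∀ s, ∫ ω in s, (g ω - E) ∂μ = ∫ ω in s, g ω ∂μ - μ.real s * E := fun s => by
    rw [integral_sub hint.integrableOn (integrable_const E), setIntegral_const, smul_eq_mul]
  have hz : μ.real Z + μ.real Zᶜ = 1 := probReal_add_probReal_compl hZ
  -- These constants stand in for the centred conditional means and avoid dividing by `Pr[Z]`.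
  have hZ_sq := two_mul_setIntegral_sub_sq_le hh Z (-(μ.real Zᶜ * (Y - X)))
  have hZc_sq := two_mul_setIntegral_sub_sq_le hh Zᶜ (μ.real Z * (Y - X))
  rw [hcentered] at hZ_sq hZc_sq
  have hcov : μ.real Z * μ.real Zᶜ * (Y - X) ≤
      μ.real Z * ∫ ω in Zᶜ, g ω ∂μ - μ.real Zᶜ * ∫ ω in Z, g ω ∂μ := by
    nlinarith [mul_le_mul_of_nonneg_left hgZc (measureReal_nonneg (s := Z) (μ := μ)),
      mul_le_mul_of_nonneg_left hgZ (measureReal_nonneg (s := Zᶜ) (μ := μ))]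
  have hz' : μ.real Z * μ.real Zᶜ * (Y - X) ^ 2 * (μ.real Z + μ.real Zᶜ) =
      μ.real Z * μ.real Zᶜ * (Y - X) ^ 2 := by rw [hz, mul_one]
  linarith [mul_le_mul_of_nonneg_right hcov (sub_nonneg.2 hXY)]

theorem integral_pos_of_variance_pos {g : Ω → ℝ} (hg0 : 0 ≤ᵐ[μ] g) (hg : Integrable g μ)
    (hvar : 0 < variance g μ) : 0 < ∫ ω, g ω ∂μ := by
  refine (integral_nonneg_of_ae hg0).lt_of_ne fun h => hvar.ne' ?_
  rw [variance_congr ((integral_eq_zero_iff_of_nonneg_ae hg0 hg).1 h.symm), variance_zero]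

theorem integral_pos_and_le_variance_div_sq [IsProbabilityMeasure μ] {g : Ω → ℝ} {M : ℝ}
    (hg : AEStronglyMeasurable g μ) (hg0 : ∀ ω, 0 ≤ g ω) (hgM : ∀ᵐ ω ∂μ, g ω ≤ M)
    {Z W : Set Ω} (hZ : MeasurableSet Z) (hW : MeasurableSet W) (hWZ : W ⊆ Zᶜ) {X D Y : ℝ}
    (hD : 0 ≤ D) (hgZ : ∀ᵐ ω ∂μ, ω ∈ Z → g ω ≤ X) (hgW : ∀ᵐ ω ∂μ, ω ∈ W → D ≤ g ω)
    {π t r : ℝ} (hπ : 0 < π) (hπZ : π ≤ μ.real Z) (hZt : μ.real Z ≤ t) (ht : t < 1)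
    (hr : 0 ≤ r) (hrW : r ≤ μ.real W) (hY : Y = r / (1 - π) * D) (hXY : X < Y) :
    0 < ∫ ω, g ω ∂μ ∧
      π / M ^ 2 * (1 - t) * (Y - X) ^ 2 ≤ variance g μ / (∫ ω, g ω ∂μ) ^ 2 := by
  have hmem : MemLp g 2 μ := MemLp.of_bound hg M <| by
    filter_upwards [hgM] with ω h
    rwa [Real.norm_of_nonneg (hg0 ω)]
  have hint := hmem.integrable one_le_two
  have hZc : μ.real Zᶜ = 1 - μ.real Z := probReal_compl_eq_one_sub hZ
  have hπ1 : 0 < 1 - π := by linarith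
  have hgZ_int : ∫ ω in Z, g ω ∂μ ≤ μ.real Z * X := by
    simpa [setIntegral_const] using
      setIntegral_mono_on_ae hint.integrableOn (integrable_const X).integrableOn hZ hgZ
  have hgZc_int : μ.real Zᶜ * Y ≤ ∫ ω in Zᶜ, g ω ∂μ := calc
    μ.real Zᶜ * Y ≤ (1 - π) * Y := by
        gcongr
        · rw [hY]; positivity
        · linarith
    _ = D * r := by rw [hY]; field_simp
    _ ≤ D * μ.real W := by gcongr
    _ = ∫ ω in W, D ∂μ := by rw [setIntegral_const, smul_eq_mul, mul_comm]
    _ ≤ ∫ ω in W, g ω ∂μ :=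
        setIntegral_mono_on_ae (integrable_const D).integrableOn hint.integrableOn hW hgW
    _ ≤ ∫ ω in Zᶜ, g ω ∂μ :=
        setIntegral_mono_set hint.integrableOn (ae_of_all _ hg0) hWZ.eventuallyLE
  have hvar := mul_sq_le_variance_of_setIntegral_le hmem hZ hXY.le hgZ_int hgZc_int
  have hprob : π * (1 - t) ≤ μ.real Z * μ.real Zᶜ :=
    mul_le_mul hπZ (by linarith) (by linarith) measureReal_nonneg
  have hvar' : π * (1 - t) * (Y - X) ^ 2 ≤ variance g μ :=
    (mul_le_mul_of_nonneg_right hprob (sq_nonneg _)).trans hvar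
  have hmean_pos : 0 < ∫ ω, g ω ∂μ := integral_pos_of_variance_pos (ae_of_all _ hg0) hint <|
    (mul_pos (mul_pos hπ (by linarith)) (pow_pos (sub_pos.2 hXY) 2)).trans_le hvar'
  have hmean_le : ∫ ω, g ω ∂μ ≤ M := by
    simpa using integral_mono_ae hint (integrable_const M) hgM
  refine ⟨hmean_pos, ?_⟩
  calc π / M ^ 2 * (1 - t) * (Y - X) ^ 2 = π * (1 - t) * (Y - X) ^ 2 / M ^ 2 := by ring
    _ ≤ variance g μ / M ^ 2 := by gcongr
    _ ≤ variance g μ / (∫ ω, g ω ∂μ) ^ 2 := by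
        gcongr
        exact variance_nonneg g μ

end Variance

theorem stmt_15_general {Ω : Type} [MeasureSpace Ω] [IsProbabilityMeasure (ℙ : Measure Ω)]
    {p : ℝ} (hp : 1 ≤ p) {m : ℕ} (hm : 0 < m)
    {α γ π ρ τ : ℝ}
    (hα1 : 1 / 2 ≤ α) (hα2 : α < 1) (hγ : 0 < γ)
    (hπ0 : 0 < π)
    (hτm : τ ^ 2 < m) (hρτ : ρ > τ ^ 2 / m)
    (q d : Ω → Fin m → ℝ) (Tq Td : Ω → Finset (Fin m))
    (hqmeas : Measurable q) (hdmeas : Measurable d)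
    (hTqmeas : Measurable Tq) (hTdmeas : Measurable Td)
    -- (i) the pair (q, T_q) is independent of the pair (d, T_d)
    (hindep : IndepFun (fun ω => (q ω, Tq ω)) (fun ω => (d ω, Td ω)) ℙ)
    -- (ii) a.s. nonnegative coordinates and unit ℓ_p^p mass
    (hunit : ∀ᵐ ω, (∀ i, 0 ≤ q ω i) ∧ (∀ i, 0 ≤ d ω i) ∧
      (∑ i, q ω i ^ p = 1) ∧ (∑ i, d ω i ^ p = 1))
    -- (iii) concentration of importance for queries
    (hconcq : ∀ᵐ ω, α ≤ ∑ i ∈ Tq ω, q ω i ^ p)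
    -- (iv) probabilistic concentration of importance for documents
    (hconcd : ρ ≤ (ℙ {ω | α ≤ ∑ i ∈ Td ω, d ω i ^ p}).toReal)
    -- (v) head-membership probability caps
    (hheadq : ∀ i, (ℙ {ω | i ∈ Tq ω}).toReal ≤ τ / m)
    (hheadd : ∀ i, (ℙ {ω | i ∈ Td ω}).toReal ≤ τ / m)
    -- (vi) overlap of importance: π ≤ Pr[S ≥ γ] ≤ τ²/m
    (hoverlap1 : π ≤
      (ℙ {ω | γ ≤ ∑ i ∈ Tq ω ∩ Td ω, min (q ω i ^ p) (d ω i ^ p)}).toReal)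
    (hoverlap2 :
      (ℙ {ω | γ ≤ ∑ i ∈ Tq ω ∩ Td ω, min (q ω i ^ p) (d ω i ^ p)}).toReal ≤ τ ^ 2 / m)
    -- the gap condition Y_m > X
    (hYX : ((ρ - τ ^ 2 / m) / (1 - π)) * 2 ^ (1 / p) *
        (α ^ (1 / p) - (1 - α) ^ (1 / p)) > (2 - 2 * γ) ^ (1 / p)) :
    (0 < ∫ ω, (∑ i, |q ω i - d ω i| ^ p) ^ (1 / p)) ∧
    variance (fun ω => (∑ i, |q ω i - d ω i| ^ p) ^ (1 / p)) ℙ /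
        (∫ ω, (∑ i, |q ω i - d ω i| ^ p) ^ (1 / p)) ^ 2 ≥
      (π / 4) * (1 - τ ^ 2 / m) *
        (((ρ - τ ^ 2 / m) / (1 - π)) * 2 ^ (1 / p) *
            (α ^ (1 / p) - (1 - α) ^ (1 / p)) - (2 - 2 * γ) ^ (1 / p)) ^ 2 := by
  set Z := {ω | γ ≤ ∑ i ∈ Tq ω ∩ Td ω, min (q ω i ^ p) (d ω i ^ p)}
  set C := {ω | α ≤ ∑ i ∈ Td ω, d ω i ^ p}
  set N := {ω | (Tq ω ∩ Td ω).Nonempty}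
  have hTT : Measurable fun ω => Tq ω ∩ Td ω :=
    (Measurable.of_discrete (f := fun T : Finset (Fin m) × Finset (Fin m) => T.1 ∩ T.2)).comp
      (hTqmeas.prodMk hTdmeas)
  have hZ : MeasurableSet Z := measurableSet_le measurable_const <|
    measurable_sum_of_measurable_finset hTT fun i => by fun_prop
  have hC : MeasurableSet C := measurableSet_le measurable_const <|
    measurable_sum_of_measurable_finset hTdmeas fun i => by fun_prop
  have hN : MeasurableSet N := @hTT {T | T.Nonempty} .of_discrete
  have hCNZ : C \ N ⊆ Zᶜ := fun ω ⟨_, hNω⟩ hZω =>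
    hNω (nonempty_of_sum_ne_zero (hγ.trans_le hZω).ne')
  have hcollision : (ℙ : Measure Ω).real N ≤ τ ^ 2 / m := by
    simpa using measureReal_inter_nonempty_le (hindep.comp measurable_snd measurable_snd)
      (by simpa [measureReal_def] using hheadq) (by simpa [measureReal_def] using hheadd)
  have hCN : ρ - τ ^ 2 / m ≤ (ℙ : Measure Ω).real (C \ N) := by
    have hC' : ρ ≤ (ℙ : Measure Ω).real C := hconcd
    linarith [le_measureReal_sdiff (μ := ℙ) (s₁ := C) (s₂ := N)]
  have hD : 0 ≤ 2 ^ (1 / p) * (α ^ (1 / p) - (1 - α) ^ (1 / p)) := mul_nonneg (by positivity)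
    (sub_nonneg.2 (one_sub_rpow_le_rpow_of_half_le hα1 hα2.le (one_div_nonneg.2 (by linarith))))
  have hδ2 : ∀ᵐ ω, lpDist p (q ω) (d ω) ≤ 2 := by
    filter_upwards [hunit] with ω ⟨hq, hd, hq1, hd1⟩
    exact lpDist_le_two hp hq hd hq1 hd1
  have hδZ : ∀ᵐ ω, ω ∈ Z → lpDist p (q ω) (d ω) ≤ (2 - 2 * γ) ^ (1 / p) := by
    filter_upwards [hunit] with ω ⟨hq, hd, hq1, hd1⟩ hZω
    exact lpDist_le_of_le_sum_min hp hq hd hq1 hd1 hZω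
  have hδCN : ∀ᵐ ω, ω ∈ C \ N →
      2 ^ (1 / p) * (α ^ (1 / p) - (1 - α) ^ (1 / p)) ≤ lpDist p (q ω) (d ω) := by
    filter_upwards [hunit, hconcq] with ω ⟨hq, hd, hq1, hd1⟩ hqω ⟨hCω, hNω⟩
    exact le_lpDist_of_disjoint hp hα1 hq hd hq1 hd1
      (disjoint_iff_inter_eq_empty.2 (not_nonempty_iff_eq_empty.1 hNω)) hqω hCω
  obtain ⟨hpos, hrel⟩ := integral_pos_and_le_variance_div_sq
    (hqmeas.lpDist hdmeas).aestronglyMeasurable (fun ω => lpDist_nonneg _ _)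
    hδ2 hZ (hC.diff hN) hCNZ hD hδZ hδCN hπ0 hoverlap1 hoverlap2
    ((div_lt_one (Nat.cast_pos.2 hm)).2 hτm) (by linarith) hCN (mul_assoc _ _ _) hYX
  exact ⟨hpos, le_of_eq_of_le (by norm_num) hrel⟩

/-- fixed-dimension quantitative form of paper Theorem 7.3, stability of
sparse vector search under concentration and overlap of importance.  Here `q, d` are an
independently drawn ℓ_p-unit nonnegative query and document, `T_q, T_d` their random head
index sets; (iii) is query concentration of importance, (iv) is probabilistic document
concentration with pass rate `ρ`, (v) caps the chance a fixed coordinate lies in a head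
set, and (vi) is overlap of importance with parameters `(γ, π)`.  Setting
`δ = ‖q - d‖_p`, `X = (2 - 2γ)^{1/p}` and
`Y_m = ((ρ - τ²/m)/(1-π))·2^{1/p}·(α^{1/p} - (1-α)^{1/p})`, if `Y_m > X` then
`E[δ] > 0` and `Var(δ)/(E[δ])² ≥ (π/4)·(1 - τ²/m)·(Y_m - X)²`. -/
theorem stmt_15 {Ω : Type} [MeasureSpace Ω] [IsProbabilityMeasure (ℙ : Measure Ω)]
    {p : ℝ} (hp : 1 ≤ p) {m : ℕ} (hm : 0 < m)
    {α γ π ρ τ : ℝ}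
    (hα1 : 1 / 2 ≤ α) (hα2 : α < 1) (hγ : 0 < γ)
    (hπ0 : 0 < π) (hπ1 : π < 1) (hρ0 : 0 < ρ) (hρ1 : ρ ≤ 1)
    (hτ : 0 < τ) (hτm : τ ^ 2 < m) (hρτ : ρ > τ ^ 2 / m)
    (q d : Ω → Fin m → ℝ) (Tq Td : Ω → Finset (Fin m))
    (hqmeas : Measurable q) (hdmeas : Measurable d)
    (hTqmeas : Measurable Tq) (hTdmeas : Measurable Td)
    -- (i) the pair (q, T_q) is independent of the pair (d, T_d)
    (hindep : IndepFun (fun ω => (q ω, Tq ω)) (fun ω => (d ω, Td ω)) ℙ)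
    -- (ii) a.s. nonnegative coordinates and unit ℓ_p^p mass
    (hunit : ∀ᵐ ω, (∀ i, 0 ≤ q ω i) ∧ (∀ i, 0 ≤ d ω i) ∧
      (∑ i, q ω i ^ p = 1) ∧ (∑ i, d ω i ^ p = 1))
    -- (iii) concentration of importance for queries
    (hconcq : ∀ᵐ ω, α ≤ ∑ i ∈ Tq ω, q ω i ^ p)
    -- (iv) probabilistic concentration of importance for documents
    (hconcd : ρ ≤ (ℙ {ω | α ≤ ∑ i ∈ Td ω, d ω i ^ p}).toReal)
    -- (v) head-membership probability caps
    (hheadq : ∀ i, (ℙ {ω | i ∈ Tq ω}).toReal ≤ τ / m)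
    (hheadd : ∀ i, (ℙ {ω | i ∈ Td ω}).toReal ≤ τ / m)
    -- (vi) overlap of importance: π ≤ Pr[S ≥ γ] ≤ τ²/m
    (hoverlap1 : π ≤
      (ℙ {ω | γ ≤ ∑ i ∈ Tq ω ∩ Td ω, min (q ω i ^ p) (d ω i ^ p)}).toReal)
    (hoverlap2 :
      (ℙ {ω | γ ≤ ∑ i ∈ Tq ω ∩ Td ω, min (q ω i ^ p) (d ω i ^ p)}).toReal ≤ τ ^ 2 / m)
    -- the gap condition Y_m > X
    (hYX : ((ρ - τ ^ 2 / m) / (1 - π)) * 2 ^ (1 / p) *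
        (α ^ (1 / p) - (1 - α) ^ (1 / p)) > (2 - 2 * γ) ^ (1 / p)) :
    (0 < ∫ ω, (∑ i, |q ω i - d ω i| ^ p) ^ (1 / p)) ∧
    variance (fun ω => (∑ i, |q ω i - d ω i| ^ p) ^ (1 / p)) ℙ /
        (∫ ω, (∑ i, |q ω i - d ω i| ^ p) ^ (1 / p)) ^ 2 ≥
      (π / 4) * (1 - τ ^ 2 / m) *
        (((ρ - τ ^ 2 / m) / (1 - π)) * 2 ^ (1 / p) *
            (α ^ (1 / p) - (1 - α) ^ (1 / p)) - (2 - 2 * γ) ^ (1 / p)) ^ 2 :=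
  stmt_15_general hp hm hα1 hα2 hγ hπ0 hτm hρτ q d Tq Td hqmeas hdmeas hTqmeas hTdmeas hindep hunit
    hconcq hconcd hheadq hheadd hoverlap1 hoverlap2 hYX
end
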